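/- arXiv:1410.0532 — 3 statements merged into one kernel-verified Lean document; each statement's English description precedes it below -/
import Mathlib

section
/- For every integer a ≥ 1, the Frobenius number of the quadruple (21a+4, 21a+7, 42a+9, 42a+15) is g(21a+4, 21a+7, 42a+9, 42a+15) = 126a² + 45a + 3. -/
/-!
Write `A = 21a + 4`, so that the generators are `A, A + 3, 2A + 1, 2A + 7`. Since
`xA + y(A + 3) + z(2A + 1) + w(2A + 7) = A(x + y + 2z + 2w) + (3y + z + 7w)`, the representable
numbers are exactly the `Ac + r` with `r = 3y + z + 7w` for some `y, z, w` of weight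
`y + 2z + 2w ≤ c`. Such an `r` is at most `7c/2`, too small to reach `A(6a + 1) - 1`, whose
residue would have to be `≡ -1 (mod A)` while `c ≤ 6a`. Conversely every residue `r < A` is
`3y + z + 7w` with weight at most `6a + 1`: the residues `r ≤ 24` need weight at most `7`, and
each further step of `21 = 3 · 7` costs weight `6`.
-/

theorem AddSubmonoid.mem_closure_quadruple {A B C D n : ℕ} :
    n ∈ AddSubmonoid.closure ({A, B, C, D} : Set ℕ) ↔
      ∃ x y z w : ℕ, x * A + y * B + z * C + w * D = n := by
  have split : ({A, B, C, D} : Set ℕ) = {A, B} ∪ {C, D} := by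
    rw [Set.insert_union, Set.singleton_union]
  rw [split, AddSubmonoid.closure_union, AddSubmonoid.mem_sup]
  simp only [AddSubmonoid.mem_closure_pair, smul_eq_mul]
  constructor
  · rintro ⟨_, ⟨x, y, rfl⟩, _, ⟨z, w, rfl⟩, rfl⟩
    exact ⟨x, y, z, w, by ring⟩
  · rintro ⟨x, y, z, w, rfl⟩
    exact ⟨_, ⟨x, y, rfl⟩, _, ⟨z, w, rfl⟩, by ring⟩

namespace FrobeniusQuadruple

variable {A n : ℕ}

theorem mem_closure_iff :
    n ∈ AddSubmonoid.closure ({A, A + 3, 2 * A + 1, 2 * A + 7} : Set ℕ) ↔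
      ∃ c y z w : ℕ, y + 2 * z + 2 * w ≤ c ∧ A * c + (3 * y + z + 7 * w) = n := by
  rw [AddSubmonoid.mem_closure_quadruple]
  constructor
  · rintro ⟨x, y, z, w, rfl⟩
    exact ⟨x + y + 2 * z + 2 * w, y, z, w, by omega, by ring⟩
  · rintro ⟨c, y, z, w, hc, rfl⟩
    obtain ⟨x, rfl⟩ := Nat.exists_eq_add_of_le' hc
    exact ⟨x, y, z, w, by ring⟩

theorem notMem_closure_of_add_one_eq_mul {q : ℕ} (hq : 7 * q < 2 * A + 5)
    (hn : n + 1 = A * q) :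
    n ∉ AddSubmonoid.closure ({A, A + 3, 2 * A + 1, 2 * A + 7} : Set ℕ) := by
  rw [mem_closure_iff]
  rintro ⟨c, y, z, w, hc, rfl⟩
  have hr : 2 * (3 * y + z + 7 * w) ≤ 7 * c := by omega
  obtain ⟨t, rfl⟩ : ∃ t, q = c + t := Nat.exists_eq_add_of_le (by nlinarith)
  have ht : 3 * y + z + 7 * w + 1 = A * t := by linarith
  rcases t with _ | t
  · omega
  · nlinarith

theorem mem_closure_of_mul_le {q : ℕ} (hA : 0 < A)
    (hrepr : ∀ r < A, ∃ y z w : ℕ, 3 * y + z + 7 * w = r ∧ y + 2 * z + 2 * w ≤ q)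
    (hn : A * q ≤ n) :
    n ∈ AddSubmonoid.closure ({A, A + 3, 2 * A + 1, 2 * A + 7} : Set ℕ) := by
  obtain ⟨y, z, w, hr, hweight⟩ := hrepr (n % A) (Nat.mod_lt n hA)
  refine mem_closure_iff.mpr ⟨n / A, y, z, w, ?_, by rw [hr, Nat.div_add_mod]⟩
  calc y + 2 * z + 2 * w ≤ q := hweight
    _ ≤ n / A := (Nat.le_div_iff_mul_le hA).mpr (by linarith [mul_comm A q])

theorem exists_repr_of_le (p : ℕ) {r : ℕ} (hr : r ≤ 21 * p + 24) :
    ∃ y z w : ℕ, 3 * y + z + 7 * w = r ∧ y + 2 * z + 2 * w ≤ 6 * p + 7 := by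
  induction p generalizing r with
  | zero =>
    have small : ∀ r < 25, ∃ y < 8, ∃ z < 3, ∃ w < 4,
        3 * y + z + 7 * w = r ∧ y + 2 * z + 2 * w ≤ 7 := by decide
    obtain ⟨y, -, z, -, w, -, h⟩ := small r (by omega)
    exact ⟨y, z, w, h⟩
  | succ p ih =>
    by_cases hr' : r ≤ 21 * p + 24
    · obtain ⟨y, z, w, hr, hweight⟩ := ih hr'
      exact ⟨y, z, w, hr, by omega⟩
    · obtain ⟨y, z, w, hr, hweight⟩ := ih (r := r - 21) (by omega)
      exact ⟨y, z, w + 3, by omega, by omega⟩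

end FrobeniusQuadruple

/-- For every integer `a ≥ 1`, the Frobenius number of the quadruple
`(21a+4, 21a+7, 42a+9, 42a+15)` is `126a² + 45a + 3`. -/
theorem frobenius_quadruple_case1 (a : ℕ) (ha : 1 ≤ a) :
    FrobeniusNumber (126 * a ^ 2 + 45 * a + 3)
      ({21 * a + 4, 21 * a + 7, 42 * a + 9, 42 * a + 15} : Set ℕ) := by
  have hgens : ({21 * a + 4, 21 * a + 7, 42 * a + 9, 42 * a + 15} : Set ℕ) =
      {21 * a + 4, 21 * a + 4 + 3, 2 * (21 * a + 4) + 1, 2 * (21 * a + 4) + 7} := by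
    ring_nf
  have hF : 126 * a ^ 2 + 45 * a + 3 + 1 = (21 * a + 4) * (6 * a + 1) := by ring
  rw [frobeniusNumber_iff, hgens]
  refine ⟨FrobeniusQuadruple.notMem_closure_of_add_one_eq_mul (by omega) hF, fun k hk => ?_⟩
  refine FrobeniusQuadruple.mem_closure_of_mul_le (q := 6 * a + 1) (by omega)
    (fun r hr => ?_) (by omega)
  obtain ⟨y, z, w, hr, hweight⟩ :=
    FrobeniusQuadruple.exists_repr_of_le (a - 1) (r := r) (by omega)
  exact ⟨y, z, w, hr, by omega⟩
end

section
/- For every integer a ≥ 1, the Frobenius number of the quadruple (21a+10, 21a+13, 42a+21, 42a+27) is g(21a+10, 21a+13, 42a+21, 42a+27) = 126a² + 123a + 29. -/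
/-!
Put `p = 21a + 10`; the generators are `p`, `p + 3`, `2p + 1` and `2p + 7`, so every element of
the semigroup is `c p + t` where `t = 3y + z + 7w` is bought with `y + 2z + 2w ≤ c` copies of `p`.
Each copy buys at most `7/2` of excess. Hence `(6a + 3) p - 1` is not representable: it would
need `c ≤ 6a + 2` and an excess of at least `p - 1 = 21a + 9 > 7 (6a + 2) / 2`. Conversely every
residue `t ≤ p - 1` is an excess of cost at most `6a + 3` (for `a = 1` by inspection, then
`21 = 3 · 7` costs `6`), so every `n ≥ (6a + 3) p` is representable.
-/

/-- The excesses over `c * p` of the elements `x p + y (p + 3) + z (2p + 1) + w (2p + 7)` with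
`x + y + 2z + 2w = c`. -/
def IsExcess (c t : ℕ) : Prop :=
  ∃ y z w : ℕ, 3 * y + z + 7 * w = t ∧ y + 2 * z + 2 * w ≤ c

namespace IsExcess

variable {c c' t : ℕ}

theorem two_mul_le (h : IsExcess c t) : 2 * t ≤ 7 * c := by
  obtain ⟨y, z, w, rfl, hc⟩ := h
  omega

theorem mono (h : IsExcess c t) (hc : c ≤ c') : IsExcess c' t := by
  obtain ⟨y, z, w, ht, hcost⟩ := h
  exact ⟨y, z, w, ht, hcost.trans hc⟩

theorem add_twentyOne (h : IsExcess c t) : IsExcess (c + 6) (t + 21) := by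
  obtain ⟨y, z, w, ht, hcost⟩ := h
  exact ⟨y, z, w + 3, by omega, by omega⟩

end IsExcess

theorem isExcess_nine_of_le_thirty {t : ℕ} (ht : t ≤ 30) : IsExcess 9 t := by
  have table : ∀ t ≤ 30, ∃ y ≤ 9, ∃ z ≤ 4, ∃ w ≤ 4,
      3 * y + z + 7 * w = t ∧ y + 2 * z + 2 * w ≤ 9 := by
    decide
  obtain ⟨y, -, z, -, w, -, hrep⟩ := table t ht
  exact ⟨y, z, w, hrep⟩

theorem isExcess_of_le {a t : ℕ} (ha : 1 ≤ a) (ht : t ≤ 21 * a + 9) :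
    IsExcess (6 * a + 3) t := by
  induction a, ha using Nat.le_induction generalizing t with
  | base => exact isExcess_nine_of_le_thirty ht
  | succ b _ ih =>
    rcases le_or_gt t (21 * b + 9) with hle | hgt
    · exact (ih hle).mono (by omega)
    · obtain ⟨s, rfl⟩ : ∃ s, t = s + 21 := ⟨t - 21, by omega⟩
      exact (ih (by omega)).add_twentyOne

theorem AddSubmonoid.mem_closure_quadruple_iff {p₁ p₂ p₃ p₄ n : ℕ} :
    n ∈ closure ({p₁, p₂, p₃, p₄} : Set ℕ) ↔
      ∃ x y z w : ℕ, x * p₁ + y * p₂ + z * p₃ + w * p₄ = n := by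
  simp only [Set.insert_eq, closure_union, mem_sup, mem_closure_singleton, smul_eq_mul]
  constructor
  · rintro ⟨_, ⟨x, rfl⟩, _, ⟨_, ⟨y, rfl⟩, _, ⟨_, ⟨z, rfl⟩, _, ⟨w, rfl⟩, rfl⟩, rfl⟩, rfl⟩
    exact ⟨x, y, z, w, by ring⟩
  · rintro ⟨x, y, z, w, rfl⟩
    exact ⟨_, ⟨x, rfl⟩, _, ⟨_, ⟨y, rfl⟩, _, ⟨_, ⟨z, rfl⟩, _, ⟨w, rfl⟩, rfl⟩, rfl⟩, by ring⟩

theorem mem_closure_iff_exists_isExcess {p n : ℕ} :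
    n ∈ AddSubmonoid.closure ({p, p + 3, 2 * p + 1, 2 * p + 7} : Set ℕ) ↔
      ∃ c t, IsExcess c t ∧ c * p + t = n := by
  rw [AddSubmonoid.mem_closure_quadruple_iff]
  constructor
  · rintro ⟨x, y, z, w, rfl⟩
    exact ⟨x + y + 2 * z + 2 * w, 3 * y + z + 7 * w, ⟨y, z, w, rfl, by omega⟩, by ring⟩
  · rintro ⟨c, _, ⟨y, z, w, rfl, hcost⟩, rfl⟩
    obtain ⟨x, rfl⟩ : ∃ x, c = x + (y + 2 * z + 2 * w) := ⟨c - (y + 2 * z + 2 * w), by omega⟩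
    exact ⟨x, y, z, w, by ring⟩

theorem notMem_closure_of_succ_eq_mul {p c n : ℕ} (hc : 7 * c < 2 * p + 5)
    (hn : n + 1 = c * p) :
    n ∉ AddSubmonoid.closure ({p, p + 3, 2 * p + 1, 2 * p + 7} : Set ℕ) := by
  rw [mem_closure_iff_exists_isExcess]
  rintro ⟨c', t, hexc, rfl⟩
  have hlt : c' < c := Nat.lt_of_mul_lt_mul_right (a := p) (by omega)
  have hp : p ≤ t + 1 := by
    have : (c' + 1) * p ≤ c * p := Nat.mul_le_mul_right p hlt
    linarith
  have := hexc.two_mul_le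
  omega

theorem mem_closure_of_mul_le {p c n : ℕ} (hp : 0 < p) (hexc : ∀ t < p, IsExcess c t)
    (hn : c * p ≤ n) :
    n ∈ AddSubmonoid.closure ({p, p + 3, 2 * p + 1, 2 * p + 7} : Set ℕ) := by
  have hc : c ≤ n / p := (Nat.le_div_iff_mul_le hp).mpr hn
  rw [mem_closure_iff_exists_isExcess]
  exact ⟨n / p, n % p, (hexc _ (Nat.mod_lt n hp)).mono hc, Nat.div_add_mod' n p⟩

/-- For every integer `a ≥ 1`, the Frobenius number of the quadruple
`(21a+10, 21a+13, 42a+21, 42a+27)` is `126a² + 123a + 29`. -/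
theorem frobenius_quadruple_case3 (a : ℕ) (ha : 1 ≤ a) :
    FrobeniusNumber (126 * a ^ 2 + 123 * a + 29)
      ({21 * a + 10, 21 * a + 13, 42 * a + 21, 42 * a + 27} : Set ℕ) := by
  have hS : ({21 * a + 10, 21 * a + 13, 42 * a + 21, 42 * a + 27} : Set ℕ) =
      {21 * a + 10, 21 * a + 10 + 3, 2 * (21 * a + 10) + 1, 2 * (21 * a + 10) + 7} := by
    ring_nf
  rw [frobeniusNumber_iff, hS]
  refine ⟨notMem_closure_of_succ_eq_mul (c := 6 * a + 3) (by omega) (by ring), ?_⟩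
  intro n hn
  exact mem_closure_of_mul_le (c := 6 * a + 3) (by omega)
    (fun t ht => isExcess_of_le ha (by omega)) (by nlinarith)
end

section
/- For every integer k ≥ 1, setting x = 4k+1, the Frobenius number of the quadruple (x, 3x+2, 9x+8, 27x+26) = (4k+1, 12k+5, 36k+17, 108k+53) equals 48k² + 16k − 1 − 3(4k+1)·(k + ⌊2k/13⌋ + ⌊(2k+6)/13⌋ − ⌊(2k+19)/26⌋). -/
/-!
Write the generators as `3^i x + 2 w_i` with `w = 0, 1, 4, 13`. A combination `∑ n_i a_i` is
`t x + 2 m` with `m = ∑ n_i w_i` and `t = ∑ 3^i n_i ≥ 3 (n₁ + 3 n₂ + 9 n₃)`, so `t x + 2 m` is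
representable exactly when `t ≥ 3 c(m)`, where `c(m)` is the least `b + 3c + 9d` subject to
`b + 4c + 13d = m`; the minimum is attained greedily. For odd `x` every residue class modulo `x`
contains some `2 m` with `m < x`, and `c` is monotone, so the worst class is the one of
`2 (x - 1)`, which gives the Frobenius number `3 c(x - 1) x + x - 2`. For `x = 4k + 1` the floor
expression of the statement is `4k - c(4k)`.
-/

theorem AddSubmonoid.mem_closure_insert_iff {A : Type*} [AddCommMonoid A] {a y : A}
    {s : Set A} : y ∈ closure (insert a s) ↔ ∃ n : ℕ, ∃ z ∈ closure s, n • a + z = y := by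
  simp_rw [Set.insert_eq, closure_union, mem_sup, mem_closure_singleton, exists_exists_eq_and]

theorem Nat.mem_closure_quadruple {a b c d n : ℕ} :
    n ∈ AddSubmonoid.closure ({a, b, c, d} : Set ℕ) ↔
      ∃ p q r s : ℕ, p * a + q * b + r * c + s * d = n := by
  simp only [AddSubmonoid.mem_closure_insert_iff, AddSubmonoid.mem_closure_singleton,
    smul_eq_mul]
  constructor
  · rintro ⟨p, _, ⟨q, _, ⟨r, _, ⟨s, rfl⟩, rfl⟩, rfl⟩, rfl⟩
    exact ⟨p, q, r, s, by ring⟩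
  · rintro ⟨p, q, r, s, rfl⟩
    exact ⟨p, _, ⟨q, _, ⟨r, _, ⟨s, rfl⟩, rfl⟩, rfl⟩, by ring⟩

def greedyCost (m : ℕ) : ℕ := m % 13 % 4 + 3 * (m % 13 / 4) + 9 * (m / 13)

theorem greedyCost_le (b c d : ℕ) : greedyCost (b + 4 * c + 13 * d) ≤ b + 3 * c + 9 * d := by
  unfold greedyCost
  omega

theorem greedyCost_monotone : Monotone greedyCost :=
  monotone_nat_of_le_succ fun m => by unfold greedyCost; omega

theorem greedyCost_four_mul (k : ℕ) :
    greedyCost (4 * k) + (k + 2 * k / 13 + (2 * k + 6) / 13 - (2 * k + 19) / 26) = 4 * k := by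
  unfold greedyCost
  -- on each residue class of `k` modulo `26` both sides are linear in `k`
  have hr : k % 26 < 26 := Nat.mod_lt _ (by norm_num)
  interval_cases h : k % 26 <;> omega

theorem mem_closure_iff_greedyCost {x n : ℕ} :
    n ∈ AddSubmonoid.closure ({x, 3 * x + 2, 9 * x + 8, 27 * x + 26} : Set ℕ) ↔
      ∃ t m, t * x + 2 * m = n ∧ 3 * greedyCost m ≤ t := by
  rw [Nat.mem_closure_quadruple]
  constructor
  · rintro ⟨p, q, r, s, rfl⟩
    refine ⟨p + 3 * (q + 3 * r + 9 * s), q + 4 * r + 13 * s, by ring, ?_⟩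
    have := greedyCost_le q r s
    omega
  · rintro ⟨t, m, rfl, ht⟩
    obtain ⟨b, c, d, hm, hcost⟩ :
        ∃ b c d, b + 4 * c + 13 * d = m ∧ b + 3 * c + 9 * d = greedyCost m :=
      ⟨m % 13 % 4, m % 13 / 4, m / 13, by omega, rfl⟩
    obtain ⟨p, rfl⟩ : ∃ p, t = p + 3 * greedyCost m := ⟨t - 3 * greedyCost m, by omega⟩
    refine ⟨p, b, c, d, ?_⟩
    rw [← hcost, ← hm]
    ring

theorem Odd.exists_mul_add_two_mul_eq_add {x : ℕ} (hx : Odd x) (n : ℕ) :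
    ∃ t m, m < x ∧ t * x + 2 * m = n + x := by
  obtain ⟨j, rfl⟩ := hx
  have hdiv := Nat.div_add_mod n (2 * j + 1)
  have hmod := Nat.mod_lt n (show 0 < 2 * j + 1 by omega)
  generalize n / (2 * j + 1) = q, n % (2 * j + 1) = r at hdiv hmod
  rcases Nat.even_or_odd r with ⟨w, rfl⟩ | ⟨w, rfl⟩
  · exact ⟨q + 1, w, by omega, by linarith⟩
  · exact ⟨q, w + j + 1, by omega, by linarith⟩

theorem frobeniusNumber_recursive_quadruple {x : ℕ} (hx : Odd x) (hx1 : 1 < x) :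
    FrobeniusNumber (3 * greedyCost (x - 1) * x + x - 2)
      ({x, 3 * x + 2, 9 * x + 8, 27 * x + 26} : Set ℕ) := by
  set g := greedyCost (x - 1)
  rw [frobeniusNumber_iff]
  constructor
  · rw [mem_closure_iff_greedyCost]
    rintro ⟨t, m, hF, ht⟩
    -- `2 m ≡ -2 (mod x)` forces `m ≥ x - 1`, and then `t ≥ 3 g` makes `t x + 2 m` too large
    have hsum : t * x + 2 * (m + 1) = (3 * g + 1) * x := by rw [add_mul]; omega
    have hdvd : x ∣ m + 1 :=
      (Nat.coprime_two_left.mpr hx).symm.dvd_of_dvd_mul_left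
        ((Nat.dvd_add_right (dvd_mul_left x t)).mp (hsum ▸ dvd_mul_left x _))
    have hm : x - 1 ≤ m := by
      have := Nat.le_of_dvd m.succ_pos hdvd
      omega
    have hgt : 3 * g * x ≤ t * x :=
      Nat.mul_le_mul_right x ((Nat.mul_le_mul_left 3 (greedyCost_monotone hm)).trans ht)
    omega
  · intro n hn
    obtain ⟨t, m, hm, hnx⟩ := hx.exists_mul_add_two_mul_eq_add n
    have hg : greedyCost m ≤ g := greedyCost_monotone (by omega)
    have ht : 3 * g + 1 ≤ t := by
      by_contra! h
      have : t * x ≤ 3 * g * x := Nat.mul_le_mul_right x (by omega)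
      omega
    have htx : x ≤ t * x := Nat.le_mul_of_pos_left x (by omega)
    rw [mem_closure_iff_greedyCost]
    exact ⟨t - 1, m, by rw [Nat.sub_one_mul]; omega, by omega⟩

/-- For every integer `k ≥ 1`, with `x = 4k+1`, the Frobenius number of the quadruple
`(x, 3x+2, 9x+8, 27x+26) = (4k+1, 12k+5, 36k+17, 108k+53)` equals
`48k² + 16k − 1 − 3(4k+1)·(k + ⌊2k/13⌋ + ⌊(2k+6)/13⌋ − ⌊(2k+19)/26⌋)`. -/
theorem frobenius_recursive_4k1 (k : ℕ) (hk : 1 ≤ k) :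
    FrobeniusNumber
      (48 * k ^ 2 + 16 * k - 1 -
        3 * (4 * k + 1) * (k + 2 * k / 13 + (2 * k + 6) / 13 - (2 * k + 19) / 26))
      ({4 * k + 1, 12 * k + 5, 36 * k + 17, 108 * k + 53} : Set ℕ) := by
  have hS := greedyCost_four_mul k
  generalize k + 2 * k / 13 + (2 * k + 6) / 13 - (2 * k + 19) / 26 = S at hS ⊢
  have hsq : 48 * k ^ 2 + 16 * k =
      3 * (4 * k + 1) * S + 3 * greedyCost (4 * k) * (4 * k + 1) + 4 * k := by
    calc _ = 3 * (4 * k + 1) * (greedyCost (4 * k) + S) + 4 * k := by rw [hS]; ring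
      _ = _ := by ring
  have hF : 48 * k ^ 2 + 16 * k - 1 - 3 * (4 * k + 1) * S
      = 3 * greedyCost (4 * k + 1 - 1) * (4 * k + 1) + (4 * k + 1) - 2 := by
    rw [Nat.add_sub_cancel]
    omega
  rw [hF, show 12 * k + 5 = 3 * (4 * k + 1) + 2 by ring,
    show 36 * k + 17 = 9 * (4 * k + 1) + 8 by ring,
    show 108 * k + 53 = 27 * (4 * k + 1) + 26 by ring]
  exact frobeniusNumber_recursive_quadruple ⟨2 * k, by ring⟩ (by omega)
end
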